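/- arXiv:1906.00890 — 2 statements merged into one kernel-verified Lean document; each statement's English description precedes it below -/
import Mathlib

section
/- Let V, V' be nonempty finite sets of integers with |V'| ≥ β² · |V| for some β > 0, let x, xᵉ : V → ℝ and x', xᵉ' : V' → ℝ, and let γ, B, H ≥ 0. Assume: (i) sqrt( Σ_{v ∈ V ∩ V'} (x'_v − xᵉ_v)² ) ≤ γ · d(x, xᵉ); (ii) d(xᵉ', xᵉ) ≤ sqrt(|V'|) · B; (iii) sqrt( Σ_{v ∈ V' \ V} (x'_v − xᵉ'_v)² ) ≤ sqrt(|V'|) · H. Then d(x', xᵉ')/sqrt(|V'|) ≤ (γ/β) · d(x, xᵉ)/sqrt(|V|) + B + H. -/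
/-!
Split `V'` into `V' ∩ V` and `V' \ V`. On the overlap, the triangle inequality in `ℓ²` through
the old reference `xe` bounds the error by `γ · d(x, xe) + d(xe', xe)`; on the new agents it is
bounded directly. Dividing by `√|V'|` and using `√|V'| ≥ β √|V|` gives the normalized estimate.
-/

open Finset

/-- The open distance between two vectors `x : V₁ → ℝ` and `y : V₂ → ℝ`
(encoded as functions `ℤ → ℝ` together with their index sets `V₁, V₂`). -/
noncomputable def openDist (V₁ V₂ : Finset ℤ) (x y : ℤ → ℝ) : ℝ :=
  Real.sqrt ((∑ v ∈ V₁ ∩ V₂, (x v - y v) ^ 2) +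
    (∑ v ∈ V₁ \ V₂, (x v) ^ 2) + (∑ v ∈ V₂ \ V₁, (y v) ^ 2))

theorem Real.sqrt_add_le_sqrt_add_sqrt {x y : ℝ} (hx : 0 ≤ x) (hy : 0 ≤ y) :
    √(x + y) ≤ √x + √y := by
  rw [Real.sqrt_le_iff]
  refine ⟨by positivity, ?_⟩
  nlinarith [Real.sq_sqrt hx, Real.sq_sqrt hy, Real.sqrt_nonneg x, Real.sqrt_nonneg y]

theorem Real.sqrt_sum_sq_add_le {ι : Type*} (s : Finset ι) (f g : ι → ℝ) :
    √(∑ i ∈ s, (f i + g i) ^ 2) ≤ √(∑ i ∈ s, f i ^ 2) + √(∑ i ∈ s, g i ^ 2) := by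
  have hnorm (h : ι → ℝ) :
      ‖(WithLp.toLp 2 fun i : s ↦ h i : EuclideanSpace ℝ s)‖ = √(∑ i ∈ s, h i ^ 2) := by
    rw [EuclideanSpace.norm_eq, ← Finset.sum_coe_sort s]
    simp only [Real.norm_eq_abs, sq_abs]
  calc √(∑ i ∈ s, (f i + g i) ^ 2)
      = ‖(WithLp.toLp 2 fun i : s ↦ f i : EuclideanSpace ℝ s) + WithLp.toLp 2 fun i : s ↦ g i‖ := by
        rw [← WithLp.toLp_add, ← hnorm]; rfl
    _ ≤ _ := norm_add_le _ _
    _ = _ := by rw [hnorm, hnorm]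

theorem Real.sqrt_sum_le_sqrt_sum_inter_add_sqrt_sum_sdiff {ι : Type*} [DecidableEq ι]
    (s t : Finset ι) {f : ι → ℝ} (hf : ∀ i, 0 ≤ f i) :
    √(∑ i ∈ s, f i) ≤ √(∑ i ∈ s ∩ t, f i) + √(∑ i ∈ s \ t, f i) := by
  rw [← Finset.sum_inter_add_sum_sdiff s t]
  exact Real.sqrt_add_le_sqrt_add_sqrt (sum_nonneg fun i _ ↦ hf i) (sum_nonneg fun i _ ↦ hf i)

theorem openDist_same (V : Finset ℤ) (x y : ℤ → ℝ) :
    openDist V V x y = √(∑ v ∈ V, (x v - y v) ^ 2) := by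
  simp [openDist]

theorem sqrt_sum_inter_sq_sub_le_openDist (V₁ V₂ : Finset ℤ) (x y : ℤ → ℝ) :
    √(∑ v ∈ V₁ ∩ V₂, (x v - y v) ^ 2) ≤ openDist V₁ V₂ x y := by
  apply Real.sqrt_le_sqrt
  have hx : 0 ≤ ∑ v ∈ V₁ \ V₂, x v ^ 2 := sum_nonneg fun _ _ ↦ sq_nonneg _
  have hy : 0 ≤ ∑ v ∈ V₂ \ V₁, y v ^ 2 := sum_nonneg fun _ _ ↦ sq_nonneg _
  linarith

/-- On `V' ∩ V` the comparison passes through the old reference `xe`; on `V' \ V` it is direct. -/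
theorem openDist_same_le_inter_add_openDist_add_sdiff (V V' : Finset ℤ) (xe x' xe' : ℤ → ℝ) :
    openDist V' V' x' xe' ≤ √(∑ v ∈ V ∩ V', (x' v - xe v) ^ 2) + openDist V' V xe' xe +
      √(∑ v ∈ V' \ V, (x' v - xe' v) ^ 2) := by
  have hoverlap : √(∑ v ∈ V' ∩ V, (x' v - xe' v) ^ 2) ≤
      √(∑ v ∈ V ∩ V', (x' v - xe v) ^ 2) + openDist V' V xe' xe := by
    calc √(∑ v ∈ V' ∩ V, (x' v - xe' v) ^ 2)
        = √(∑ v ∈ V' ∩ V, ((x' v - xe v) + -(xe' v - xe v)) ^ 2) := by ring_nf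
      _ ≤ √(∑ v ∈ V' ∩ V, (x' v - xe v) ^ 2) + √(∑ v ∈ V' ∩ V, (-(xe' v - xe v)) ^ 2) :=
        Real.sqrt_sum_sq_add_le _ _ _
      _ ≤ √(∑ v ∈ V ∩ V', (x' v - xe v) ^ 2) + openDist V' V xe' xe := by
        simp only [neg_sq, inter_comm V' V]
        gcongr
        rw [inter_comm]
        exact sqrt_sum_inter_sq_sub_le_openDist V' V xe' xe
  rw [openDist_same]
  have := Real.sqrt_sum_le_sqrt_sum_inter_add_sqrt_sum_sdiff V' V
    (f := fun v ↦ (x' v - xe' v) ^ 2) fun _ ↦ sq_nonneg _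
  linarith

theorem div_sqrt_le_div_mul_div_sqrt {γ β D n n' : ℝ} (hγ : 0 ≤ γ) (hβ : 0 < β) (hD : 0 ≤ D)
    (hn : 0 < n) (hcard : β ^ 2 * n ≤ n') :
    γ * D / √n' ≤ γ / β * (D / √n) := by
  have hβn : β * √n ≤ √n' := by
    calc β * √n = √(β ^ 2 * n) := by rw [Real.sqrt_mul (sq_nonneg β), Real.sqrt_sq hβ.le]
      _ ≤ √n' := Real.sqrt_le_sqrt hcard
  rw [div_mul_div_comm]
  exact div_le_div_of_nonneg_left (by positivity) (by positivity) hβn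

theorem openDist_one_step_normalized_bound_general (V V' : Finset ℤ)
    (hV : V.Nonempty) (hV' : V'.Nonempty) (β : ℝ) (hβ : 0 < β)
    (hcard : ((V' : Finset ℤ).card : ℝ) ≥ β ^ 2 * ((V : Finset ℤ).card : ℝ))
    (x xe x' xe' : ℤ → ℝ) (γ B H : ℝ)
    (hγ : 0 ≤ γ)
    (hcontr : Real.sqrt (∑ v ∈ V ∩ V', (x' v - xe v) ^ 2) ≤ γ * openDist V V x xe)
    (hvar : openDist V' V xe' xe ≤ Real.sqrt ((V' : Finset ℤ).card) * B)
    (hjoin : Real.sqrt (∑ v ∈ V' \ V, (x' v - xe' v) ^ 2) ≤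
      Real.sqrt ((V' : Finset ℤ).card) * H) :
    openDist V' V' x' xe' / Real.sqrt ((V' : Finset ℤ).card) ≤
      (γ / β) * (openDist V V x xe / Real.sqrt ((V : Finset ℤ).card)) + B + H := by
  have hsV' : 0 < √(V'.card : ℝ) := Real.sqrt_pos.mpr (mod_cast hV'.card_pos)
  have hscale := div_sqrt_le_div_mul_div_sqrt (D := openDist V V x xe) hγ hβ
    (Real.sqrt_nonneg _) (mod_cast hV.card_pos) hcard
  have hstep := (openDist_same_le_inter_add_openDist_add_sdiff V V' xe x' xe').trans
    (add_le_add_three hcontr hvar hjoin)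
  calc openDist V' V' x' xe' / √(V'.card : ℝ)
      ≤ (γ * openDist V V x xe + √(V'.card : ℝ) * B + √(V'.card : ℝ) * H) / √(V'.card : ℝ) :=
        div_le_div_of_nonneg_right hstep hsV'.le
    _ = γ * openDist V V x xe / √(V'.card : ℝ) + B + H := by
        field_simp
    _ ≤ _ := by linarith [hscale]

/-- One-step normalized estimate for open multi-agent systems. -/
theorem openDist_one_step_normalized_bound (V V' : Finset ℤ)
    (hV : V.Nonempty) (hV' : V'.Nonempty) (β : ℝ) (hβ : 0 < β)
    (hcard : ((V' : Finset ℤ).card : ℝ) ≥ β ^ 2 * ((V : Finset ℤ).card : ℝ))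
    (x xe x' xe' : ℤ → ℝ) (γ B H : ℝ)
    (hγ : 0 ≤ γ) (hB : 0 ≤ B) (hH : 0 ≤ H)
    (hcontr : Real.sqrt (∑ v ∈ V ∩ V', (x' v - xe v) ^ 2) ≤ γ * openDist V V x xe)
    (hvar : openDist V' V xe' xe ≤ Real.sqrt ((V' : Finset ℤ).card) * B)
    (hjoin : Real.sqrt (∑ v ∈ V' \ V, (x' v - xe' v) ^ 2) ≤
      Real.sqrt ((V' : Finset ℤ).card) * H) :
    openDist V' V' x' xe' / Real.sqrt ((V' : Finset ℤ).card) ≤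
      (γ / β) * (openDist V V x xe / Real.sqrt ((V : Finset ℤ).card)) + B + H :=
  openDist_one_step_normalized_bound_general V V' hV hV' β hβ hcard x xe x' xe' γ B H hγ hcontr hvar
    hjoin
end

section
/- Let G be a simple graph on a nonempty finite vertex type V with n = |V| vertices and graph Laplacian L, let α, ε > 0, and let λ₂ ≥ 0 be such that wᵀ L w ≥ λ₂ · ‖w‖² for every w : V → ℝ with Σ_v w_v = 0. Let u : V → ℝ, let ū = ((Σ_v u_v)/n)·𝟙 be the constant vector of the average of u, and assume ‖u − ū‖_∞ ≤ Π. Let xᵉ = (αI + εL)⁻¹ (α u) be the point of interest. Then ‖xᵉ − ū‖ ≤ (1/(1 + (ε/α) λ₂)) · sqrt(n) · Π. -/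
open Matrix Finset

/-
Write `w = xᵉ - ū` and `d = u - ū`. Since `L ū = 0`, the defining equation of `xᵉ` becomes
`α w + ε L w = α d`. Summing its entries (the columns of `L` sum to zero) shows that `w` has
zero sum along with `d`, so the hypothesis on `λ₂` applies to `w`. Pairing the equation with `w`
and using Cauchy–Schwarz gives `(α + ελ₂)‖w‖² ≤ α ‖w‖ ‖d‖`, hence `‖w‖ ≤ α/(α + ελ₂) ‖d‖`,
and `‖d‖ ≤ √n Π` because every entry of `d` is at most `Π` in absolute value.
-/

theorem Finset.sum_sub_sum_div_card {V : Type*} [Fintype V] (u : V → ℝ) :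
    ∑ v, (u v - (∑ w, u w) / Fintype.card V) = 0 := by
  rw [← Fintype.expect_eq_sum_div_card, sum_sub_distrib, sum_const, card_smul_expect, sub_self]

theorem Real.sqrt_sum_sq_le_sqrt_card_mul {V : Type*} [Fintype V] {d : V → ℝ} {c : ℝ}
    (h : ∀ v, |d v| ≤ c) : √(∑ v, d v ^ 2) ≤ √(Fintype.card V) * c := by
  rcases isEmpty_or_nonempty V with _ | ⟨⟨v₀⟩⟩
  · simp
  have hc : 0 ≤ c := (abs_nonneg _).trans (h v₀)
  calc √(∑ v, d v ^ 2) ≤ √(∑ _v : V, c ^ 2) :=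
        Real.sqrt_le_sqrt <| sum_le_sum fun v _ => sq_le_sq' (abs_le.mp (h v)).1 (abs_le.mp (h v)).2
    _ = √(Fintype.card V) * c := by
        rw [sum_const, card_univ, nsmul_eq_mul, Real.sqrt_mul (Nat.cast_nonneg _),
          Real.sqrt_sq hc]

theorem Matrix.add_mul_sqrt_sum_sq_le_of_smul_add_smul_mulVec_eq {V : Type*} [Fintype V]
    {L : Matrix V V ℝ} {α ε lam : ℝ} (hα : 0 ≤ α) (hε : 0 ≤ ε) {w d : V → ℝ}
    (hL : lam * (w ⬝ᵥ w) ≤ w ⬝ᵥ L *ᵥ w) (h : α • w + ε • L *ᵥ w = α • d) :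
    (α + ε * lam) * √(∑ v, w v ^ 2) ≤ α * √(∑ v, d v ^ 2) := by
  set S := ∑ v, w v ^ 2
  have hS : 0 ≤ S := by positivity
  have hww : w ⬝ᵥ w = S := by simp only [S, dotProduct, sq]
  have hpair : α * S + ε * (w ⬝ᵥ L *ᵥ w) = α * (w ⬝ᵥ d) := by
    simpa only [dotProduct_add, dotProduct_smul, smul_eq_mul, hww] using congrArg (w ⬝ᵥ ·) h
  have hquad : (α + ε * lam) * S ≤ α * (√(∑ v, d v ^ 2) * √S) := calc
    (α + ε * lam) * S = α * S + ε * (lam * (w ⬝ᵥ w)) := by rw [hww]; ring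
    _ ≤ α * S + ε * (w ⬝ᵥ L *ᵥ w) := by gcongr
    _ = α * (w ⬝ᵥ d) := hpair
    _ ≤ α * (√(∑ v, d v ^ 2) * √S) := by
      rw [mul_comm (√_)]
      gcongr
      exact Real.sum_mul_le_sqrt_mul_sqrt univ w d
  rcases (Real.sqrt_nonneg S).eq_or_lt with h0 | hpos
  · rw [← h0, mul_zero]
    exact mul_nonneg hα (Real.sqrt_nonneg _)
  · refine le_of_mul_le_mul_right ?_ hpos
    rwa [mul_assoc, Real.mul_self_sqrt hS, mul_assoc]

namespace SimpleGraph

variable {V : Type*} [Fintype V] [DecidableEq V] (G : SimpleGraph V) [DecidableRel G.Adj]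

theorem lapMatrix_mulVec_const {R : Type*} [NonAssocRing R] (c : R) :
    G.lapMatrix R *ᵥ (fun _ => c) = 0 := by
  ext v
  simp [lapMatrix_mulVec_apply]

theorem sum_lapMatrix_mulVec {R : Type*} [CommRing R] (w : V → R) :
    ∑ v, (G.lapMatrix R *ᵥ w) v = 0 := by
  have h : (fun _ => (1 : R)) ⬝ᵥ G.lapMatrix R *ᵥ w = 0 := by
    rw [dotProduct_mulVec, ← mulVec_transpose, G.isSymm_lapMatrix R,
      lapMatrix_mulVec_const_eq_zero, zero_dotProduct]
  simpa [dotProduct] using h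

theorem posDef_smul_one_add_smul_lapMatrix {α ε : ℝ} (hα : 0 < α) (hε : 0 ≤ ε) :
    (α • (1 : Matrix V V ℝ) + ε • G.lapMatrix ℝ).PosDef :=
  (PosDef.one.smul hα).add_posSemidef ((G.posSemidef_lapMatrix ℝ).smul hε)

theorem sum_eq_of_smul_add_smul_lapMatrix_mulVec_eq {α ε : ℝ} (hα : α ≠ 0) {w d : V → ℝ}
    (h : α • w + ε • G.lapMatrix ℝ *ᵥ w = α • d) : ∑ v, w v = ∑ v, d v := by
  have hsum := congrArg (fun x => ∑ v, x v) h
  simp only [Pi.add_apply, Pi.smul_apply, smul_eq_mul, sum_add_distrib, ← mul_sum,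
    sum_lapMatrix_mulVec, mul_zero, add_zero] at hsum
  exact mul_left_cancel₀ hα hsum

end SimpleGraph

theorem proportional_dynamic_consensus_poi_error_general {V : Type*} [Fintype V]
    [DecidableEq V] (G : SimpleGraph V) [DecidableRel G.Adj]
    (α ε lam2 Pi' : ℝ) (hα : 0 < α) (hε : 0 < ε) (hlam2 : 0 ≤ lam2)
    (hconn : ∀ w : V → ℝ, (∑ v, w v) = 0 →
      w ⬝ᵥ (G.lapMatrix ℝ) *ᵥ w ≥ lam2 * (w ⬝ᵥ w))
    (u ubar xe : V → ℝ)
    (hubar : ubar = fun _ => (∑ v, u v) / (Fintype.card V : ℝ))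
    (hPi : ∀ v, |u v - ubar v| ≤ Pi')
    (hxe : xe = (α • (1 : Matrix V V ℝ) + ε • G.lapMatrix ℝ)⁻¹ *ᵥ (α • u)) :
    Real.sqrt (∑ v, (xe v - ubar v) ^ 2) ≤
      1 / (1 + (ε / α) * lam2) * Real.sqrt (Fintype.card V : ℝ) * Pi' := by
  have hM := (G.posDef_smul_one_add_smul_lapMatrix hα hε.le).isUnit
  have hxe' : α • xe + ε • G.lapMatrix ℝ *ᵥ xe = α • u := by
    have h := congrArg ((α • (1 : Matrix V V ℝ) + ε • G.lapMatrix ℝ) *ᵥ ·) hxe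
    rwa [mulVec_mulVec, mul_nonsing_inv _ ((isUnit_iff_isUnit_det _).mp hM), one_mulVec,
      add_mulVec, smul_mulVec, smul_mulVec, one_mulVec] at h
  have hw : α • (xe - ubar) + ε • G.lapMatrix ℝ *ᵥ (xe - ubar) = α • (u - ubar) := by
    rw [mulVec_sub, hubar, G.lapMatrix_mulVec_const, sub_zero]
    simp only [smul_sub, ← hxe']
    abel
  have hw0 : ∑ v, (xe - ubar) v = 0 :=
    (G.sum_eq_of_smul_add_smul_lapMatrix_mulVec_eq hα.ne' hw).trans
      (hubar ▸ sum_sub_sum_div_card u)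
  have henergy := add_mul_sqrt_sum_sq_le_of_smul_add_smul_mulVec_eq hα.le hε.le
    (hconn _ hw0) hw
  have hd := Real.sqrt_sum_sq_le_sqrt_card_mul hPi
  have hden : 0 < α + ε * lam2 := by positivity
  rw [show 1 / (1 + ε / α * lam2) = α / (α + ε * lam2) by field_simp, mul_assoc,
    div_mul_eq_mul_div, le_div_iff₀ hden, mul_comm]
  exact henergy.trans (mul_le_mul_of_nonneg_left hd hα.le)

/-- Distance between the point of interest `xᵉ = (αI + εL)⁻¹(αu)` of Proportional
Dynamic Consensus and the constant vector `ū` of the average input: if the input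
disagreement is bounded by `Π` in the sup norm, then
`‖xᵉ - ū‖ ≤ (1/(1 + (ε/α)λ₂)) √n Π`. -/
theorem proportional_dynamic_consensus_poi_error {V : Type*} [Fintype V]
    [DecidableEq V] [Nonempty V] (G : SimpleGraph V) [DecidableRel G.Adj]
    (α ε lam2 Pi' : ℝ) (hα : 0 < α) (hε : 0 < ε) (hlam2 : 0 ≤ lam2)
    (hconn : ∀ w : V → ℝ, (∑ v, w v) = 0 →
      w ⬝ᵥ (G.lapMatrix ℝ) *ᵥ w ≥ lam2 * (w ⬝ᵥ w))
    (u ubar xe : V → ℝ)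
    (hubar : ubar = fun _ => (∑ v, u v) / (Fintype.card V : ℝ))
    (hPi : ∀ v, |u v - ubar v| ≤ Pi')
    (hxe : xe = (α • (1 : Matrix V V ℝ) + ε • G.lapMatrix ℝ)⁻¹ *ᵥ (α • u)) :
    Real.sqrt (∑ v, (xe v - ubar v) ^ 2) ≤
      1 / (1 + (ε / α) * lam2) * Real.sqrt (Fintype.card V : ℝ) * Pi' :=
  proportional_dynamic_consensus_poi_error_general G α ε lam2 Pi' hα hε hlam2 hconn u ubar xe hubar
    hPi hxe
end
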